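/- arXiv:math/0105086 — 5 statements merged into one kernel-verified Lean document; each statement's English description precedes it below -/
import Mathlib

section
/- Let (X,d̂) be a metric space and suppose there are constants δ₁, C' ≥ 0 and a map m : X × X → X such that for all x,y ∈ X: |d̂(x,m(x,y)) − d̂(x,y)/2| ≤ δ₁, |d̂(m(x,y),y) − d̂(x,y)/2| ≤ δ₁, and for all z ∈ X, d̂(z,m(x,y)) + d̂(x,y) ≤ sup{d̂(x,z) + d̂(y,m(x,y)), d̂(y,z) + d̂(x,m(x,y))} + C'. Then setting δ₂ := (δ₁ + C')/2, for all x,y,z ∈ X: 2·d̂(z,m(x,y)) ≤ (2·d̂(x,z)² + 2·d̂(y,z)² − d̂(x,y)²)^{1/2} + 4δ₂. -/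
/-! Since `m x y` is a quasi-midpoint, the hypothesis on `d(z, m)` gives
`2 d(z, m) ≤ 2 max (d(x,z), d(y,z)) - d(x,y) + 2(δ₁ + C')`. With `u = max`, `t = min` and
`v = d(x,y)`, the triangle inequality `|u - v| ≤ t` is exactly what makes
`(2u - v)² ≤ 2u² + 2t² - v²`. -/

theorem two_mul_sub_le_sqrt_of_abs_sub_le {u t v : ℝ} (h : |u - v| ≤ t) :
    2 * u - v ≤ √(2 * u ^ 2 + 2 * t ^ 2 - v ^ 2) := by
  rcases le_or_gt (2 * u - v) 0 with hneg | hpos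
  · exact hneg.trans (Real.sqrt_nonneg _)
  · rw [Real.le_sqrt' hpos]
    nlinarith [sq_le_sq' (abs_le.1 h).1 (abs_le.1 h).2]

section Metric

variable {X : Type*} [PseudoMetricSpace X]

theorem two_mul_max_dist_sub_le_sqrt (x y z : X) :
    2 * max (dist x z) (dist y z) - dist x y ≤
      √(2 * dist x z ^ 2 + 2 * dist y z ^ 2 - dist x y ^ 2) := by
  rcases le_total (dist x z) (dist y z) with hle | hle
  · rw [max_eq_right hle, add_comm (2 * dist x z ^ 2)]
    refine two_mul_sub_le_sqrt_of_abs_sub_le ?_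
    simpa only [dist_comm] using abs_dist_sub_le z x y
  · rw [max_eq_left hle]
    refine two_mul_sub_le_sqrt_of_abs_sub_le ?_
    simpa only [dist_comm] using abs_dist_sub_le z y x

theorem two_mul_dist_le_of_quasiMidpoint {x y z p : X} {δ C : ℝ}
    (hx : dist x p ≤ dist x y / 2 + δ) (hy : dist y p ≤ dist x y / 2 + δ)
    (h : dist z p + dist x y ≤ max (dist x z + dist y p) (dist y z + dist x p) + C) :
    2 * dist z p ≤ 2 * max (dist x z) (dist y z) - dist x y + 2 * (δ + C) := by
  have hmax : max (dist x z + dist y p) (dist y z + dist x p) ≤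
      max (dist x z) (dist y z) + (dist x y / 2 + δ) :=
    max_le (add_le_add (le_max_left _ _) hy) (add_le_add (le_max_right _ _) hx)
  linarith

end Metric

theorem bolicity_B2_general {X : Type*} [MetricSpace X]
    (δ₁ C' : ℝ)
    (m : X → X → X)
    (hm₁ : ∀ x y : X, |dist x (m x y) - dist x y / 2| ≤ δ₁)
    (hm₂ : ∀ x y : X, |dist (m x y) y - dist x y / 2| ≤ δ₁)
    (hm₃ : ∀ x y z : X, dist z (m x y) + dist x y ≤
      max (dist x z + dist y (m x y)) (dist y z + dist x (m x y)) + C') :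
    ∀ x y z : X, 2 * dist z (m x y) ≤
      Real.sqrt (2 * dist x z ^ 2 + 2 * dist y z ^ 2 - dist x y ^ 2) +
        4 * ((δ₁ + C') / 2) := by
  intro x y z
  have hx : dist x (m x y) ≤ dist x y / 2 + δ₁ := by linarith [(abs_le.1 (hm₁ x y)).2]
  have hy : dist y (m x y) ≤ dist x y / 2 + δ₁ := by
    rw [dist_comm]
    linarith [(abs_le.1 (hm₂ x y)).2]
  linarith [two_mul_dist_le_of_quasiMidpoint hx hy (hm₃ x y z),
    two_mul_max_dist_sub_le_sqrt x y z]

theorem bolicity_B2 {X : Type*} [MetricSpace X]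
    (δ₁ C' : ℝ) (hδ₁ : 0 ≤ δ₁) (hC' : 0 ≤ C')
    (m : X → X → X)
    (hm₁ : ∀ x y : X, |dist x (m x y) - dist x y / 2| ≤ δ₁)
    (hm₂ : ∀ x y : X, |dist (m x y) y - dist x y / 2| ≤ δ₁)
    (hm₃ : ∀ x y z : X, dist z (m x y) + dist x y ≤
      max (dist x z + dist y (m x y)) (dist y z + dist x (m x y)) + C') :
    ∀ x y z : X, 2 * dist z (m x y) ≤
      Real.sqrt (2 * dist x z ^ 2 + 2 * dist y z ^ 2 - dist x y ^ 2) +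
        4 * ((δ₁ + C') / 2) :=
  bolicity_B2_general δ₁ C' m hm₁ hm₂ hm₃
end

section
/- Let r : G × G → ℝ be a function such that there exists N ≥ 0 with |r(a,b) − r(a,b')| ≤ d(b,b') + N for all a,b,b' ∈ G. Then for D := (1/2)(1+N), for every a ∈ G and every 0-cycle z (a finitely supported function z : G → ℚ whose values sum to 0), |r(a,z)| ≤ D·|z|₁·diam(supp z), where r(a,·) is extended linearly and |z|₁ is the ℓ¹-norm. -/
/-- The ℓ¹-norm of a 0-chain, as a real number. -/
def l1norm {G : Type*} (z : G →₀ ℚ) : ℝ := z.sum fun _ q => |(q : ℝ)|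

theorem r_of_cycle_bound {G : Type*} [MetricSpace G]
    -- `d` is a graph path metric: between any two vertices there is a chain of unit steps
    (hchain : ∀ b b' : G, ∃ (n : ℕ) (c : ℕ → G), c 0 = b ∧ c n = b' ∧
      (n : ℝ) = dist b b' ∧ ∀ i < n, dist (c i) (c (i + 1)) ≤ 1)
    (r : G → G → ℝ) (N : ℝ) (hN : 0 ≤ N)
    (hr : ∀ a b b' : G, |r a b - r a b'| ≤ dist b b' + N)
    (a : G) (z : G →₀ ℚ) (hz : z.sum (fun _ q => q) = 0) :
    |z.sum fun x q => (q : ℝ) * r a x| ≤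
      ((1 : ℝ) / 2) * (1 + N) * l1norm z * Metric.diam (z.support : Set G) := by
  rcases z.support.eq_empty_or_nonempty with he | hne
  · have hz0 : z = 0 := Finsupp.support_eq_empty.mp he
    subst hz0
    simp [l1norm]
  · set S := z.support with hS
    obtain ⟨x₀, hx₀, hmin⟩ := S.exists_min_image (r a) hne
    obtain ⟨x₁, hx₁, hmax⟩ := S.exists_max_image (r a) hne
    set D := Metric.diam (S : Set G) with hDdef
    have hbd : Bornology.IsBounded (S : Set G) := S.finite_toSet.isBounded
    have hD0 : 0 ≤ D := Metric.diam_nonneg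
    -- diam ≥ 1
    have hdiam1 : 1 ≤ D := by
      obtain ⟨y, hy, hyx⟩ : ∃ y ∈ S, y ≠ x₀ := by
        by_contra h
        push_neg at h
        have hSs : S = {x₀} := Finset.eq_singleton_iff_unique_mem.mpr ⟨hx₀, fun y hy => h y hy⟩
        have hsum : z.sum (fun _ q => q) = z x₀ := by
          rw [Finsupp.sum, ← hS, hSs, Finset.sum_singleton]
        have hzx₀ : z x₀ ≠ 0 := Finsupp.mem_support_iff.mp hx₀
        exact hzx₀ (by rw [← hsum, hz])
      obtain ⟨n, cc, hc0, hcn, hcd, _⟩ := hchain y x₀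
      have hn : n ≠ 0 := by
        rintro rfl
        exact hyx (hc0 ▸ hcn ▸ rfl)
      have h1n : (1 : ℝ) ≤ n := by exact_mod_cast Nat.one_le_iff_ne_zero.mpr hn
      calc (1 : ℝ) ≤ dist y x₀ := hcd ▸ h1n
        _ ≤ D := Metric.dist_le_diam_of_mem hbd hy hx₀
    have hMm : r a x₁ - r a x₀ ≤ D + N := by
      have h1 := hr a x₁ x₀
      have hd : dist x₁ x₀ ≤ D := Metric.dist_le_diam_of_mem hbd hx₁ hx₀
      have := le_abs_self (r a x₁ - r a x₀)
      linarith
    set c : ℝ := (r a x₀ + r a x₁) / 2 with hc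
    have hbound : ∀ x ∈ S, |r a x - c| ≤ (D + N) / 2 := by
      intro x hx
      have h1 := hmin x hx
      have h2 := hmax x hx
      rw [abs_le]
      constructor <;> simp only [hc] <;> linarith
    have hsum0 : ∑ x ∈ S, (z x : ℝ) = 0 := by
      have : ((z.sum (fun _ q => q) : ℚ) : ℝ) = 0 := by rw [hz]; norm_num
      rw [Finsupp.sum] at this
      push_cast at this
      exact this
    have heq : (z.sum fun x q => (q : ℝ) * r a x) = ∑ x ∈ S, (z x : ℝ) * (r a x - c) := by
      rw [Finsupp.sum]
      simp only [mul_sub]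
      rw [Finset.sum_sub_distrib, ← Finset.sum_mul, hsum0]
      ring
    have hl1 : l1norm z = ∑ x ∈ S, |(z x : ℝ)| := rfl
    have hl1nn : 0 ≤ l1norm z := by
      rw [hl1]; exact Finset.sum_nonneg fun x _ => abs_nonneg _
    calc |z.sum fun x q => (q : ℝ) * r a x|
        = |∑ x ∈ S, (z x : ℝ) * (r a x - c)| := by rw [heq]
      _ ≤ ∑ x ∈ S, |(z x : ℝ) * (r a x - c)| := Finset.abs_sum_le_sum_abs _ _
      _ = ∑ x ∈ S, |(z x : ℝ)| * |r a x - c| := by simp [abs_mul]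
      _ ≤ ∑ x ∈ S, |(z x : ℝ)| * ((D + N) / 2) :=
          Finset.sum_le_sum fun x hx =>
            mul_le_mul_of_nonneg_left (hbound x hx) (abs_nonneg _)
      _ = l1norm z * ((D + N) / 2) := by rw [← Finset.sum_mul, hl1]
      _ ≤ (1 : ℝ) / 2 * (1 + N) * l1norm z * D := by
          have hDN : D + N ≤ (1 + N) * D := by nlinarith
          nlinarith
end

section
/- Let d̂ be a metric on the vertex set of a graph with path metric d such that: (i) for adjacent vertices z, z' (d(z,z') = 1), |d̂(x,z) − d̂(x,z')| ≤ M for all x; (ii) for any vertex z on a geodesic path from x to y, |d̂(x,y) − d̂(x,z) − d̂(z,y)| ≤ C for a constant C ≥ 0. Then (G, d̂) is weakly geodesic with constant δ₁ := M + C: for all x,y and every t ∈ [0, d̂(x,y)] there exists a vertex a with d̂(x,a) ≤ t + δ₁ and d̂(a,y) ≤ d̂(x,y) − t + δ₁. -/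
theorem dhat_weakly_geodesic {G : Type*} [MetricSpace G]
    (M C : ℝ) (hM : 0 ≤ M) (hC : 0 ≤ C)
    -- the metric `dist` on `G` is a graph path metric: geodesic edge-paths exist
    (hpath : ∀ x y : G, ∃ (n : ℕ) (c : ℕ → G), c 0 = x ∧ c n = y ∧
      (n : ℝ) = dist x y ∧ (∀ i < n, dist (c i) (c (i + 1)) = 1) ∧
      ∀ i ≤ n, dist x (c i) + dist (c i) y = dist x y)
    (dhat : G → G → ℝ)
    -- dhat is a metric
    (hsymm : ∀ x y : G, dhat x y = dhat y x)
    (hzero : ∀ x y : G, dhat x y = 0 ↔ x = y)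
    (hnonneg : ∀ x y : G, 0 ≤ dhat x y)
    (htri : ∀ x y z : G, dhat x z ≤ dhat x y + dhat y z)
    -- (i): adjacent vertices are uniformly dhat-close
    (hadj : ∀ x z z' : G, dist z z' = 1 → |dhat x z - dhat x z'| ≤ M)
    -- (ii): dhat is almost-additive along geodesics of the path metric
    (hgeo : ∀ x y z : G, dist x z + dist z y = dist x y →
      |dhat x y - dhat x z - dhat z y| ≤ C) :
    ∀ x y : G, ∀ t : ℝ, 0 ≤ t → t ≤ dhat x y →
      ∃ a : G, dhat x a ≤ t + (M + C) ∧ dhat a y ≤ dhat x y - t + (M + C) := by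
  classical
  intro x y t ht0 ht1
  obtain ⟨n, c, hc0, hcn, hn, hstep, hgeod⟩ := hpath x y
  by_cases h : ∀ i ≤ n, dhat x (c i) ≤ t
  · refine ⟨y, ?_, ?_⟩
    · have := h n le_rfl
      rw [hcn] at this
      linarith
    · have : dhat y y = 0 := (hzero y y).2 rfl
      linarith
  · push_neg at h
    obtain ⟨i, hin, hit⟩ := h
    have hex : ∃ j, t < dhat x (c j) := ⟨i, hit⟩
    have hjt : t < dhat x (c (Nat.find hex)) := Nat.find_spec hex
    have hjle : Nat.find hex ≤ i := Nat.find_le hit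
    have hj0 : Nat.find hex ≠ 0 := by
      intro h0
      rw [h0, hc0, (hzero x x).2 rfl] at hjt
      linarith
    obtain ⟨k, hjk⟩ := Nat.exists_eq_succ_of_ne_zero hj0
    rw [hjk] at hjt hjle
    have hkn : k < n := lt_of_lt_of_le (Nat.lt_succ_self k) (le_trans hjle hin)
    have hkt : dhat x (c k) ≤ t := by
      have := Nat.find_min hex (hjk ▸ Nat.lt_succ_self k)
      linarith [not_lt.mp this]
    have hadjk := hadj x (c k) (c (k + 1)) (hstep k hkn)
    rw [abs_le] at hadjk
    have hgk := hgeo x y (c k) (hgeod k hkn.le)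
    rw [abs_le] at hgk
    exact ⟨c k, by linarith, by linarith⟩
end

section
/- Let (X,d̂) be a metric space such that for every R ≥ 0 and all a,a',b,b' with d̂(a,a') ≤ R' and d̂(b,b') ≤ R' one has |d̂(a,b) − d̂(a',b) − d̂(a,b') + d̂(a',b')| → 0 as d̂(a,b) → ∞, uniformly in the sense that there exist C ≥ 0 and 0 ≤ μ < 1 with the bound R²·C·μ^{d(a,b)−2R} for an auxiliary metric d quasi-isometric to d̂. Then (X,d̂) satisfies condition (B1) of strong bolicity for every δ₂ > 0: for every R > 0 there exists R' > 0 such that d̂(a,a') + d̂(b,b') ≤ R and d̂(a,b) + d̂(a',b') ≥ R' imply d̂(a,b') + d̂(a',b) ≤ d̂(a,b) + d̂(a',b') + 2δ₂. -/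
theorem condition_B1_for_all_delta {X : Type*} [MetricSpace X]
    -- `dist` plays the role of the metric d̂; `d` is an auxiliary metric
    (d : X → X → ℝ)
    (hdsymm : ∀ x y : X, d x y = d y x)
    (hdzero : ∀ x y : X, d x y = 0 ↔ x = y)
    (hdnonneg : ∀ x y : X, 0 ≤ d x y)
    (hdtri : ∀ x y z : X, d x z ≤ d x y + d y z)
    -- d is quasi-isometric to d̂
    (A B : ℝ) (hA : 0 < A) (hB : 0 ≤ B)
    (hqi : ∀ x y : X, (1 / A) * dist x y - B ≤ d x y ∧ d x y ≤ A * dist x y + B)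
    -- exponential-decay estimate for the double difference
    (C μ : ℝ) (hC : 0 ≤ C) (hμ₀ : 0 ≤ μ) (hμ₁ : μ < 1)
    (hdecay : ∀ (R : ℕ) (a a' b b' : X), d a a' ≤ R → d b b' ≤ R →
      |dist a b - dist a' b - dist a b' + dist a' b'| ≤
        (R : ℝ) ^ 2 * C * μ ^ (d a b - 2 * R)) :
    -- condition (B1) of strong bolicity holds for every δ₂ > 0
    ∀ δ₂ : ℝ, 0 < δ₂ → ∀ R : ℝ, 0 < R → ∃ R' : ℝ, 0 < R' ∧
      ∀ a a' b b' : X, dist a a' + dist b b' ≤ R → dist a b + dist a' b' ≥ R' →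
        dist a b' + dist a' b ≤ dist a b + dist a' b' + 2 * δ₂ := by
  intro δ₂ hδ R hR
  set N : ℕ := ⌈A * R + B⌉₊ with hN
  have hNge : A * R + B ≤ (N : ℝ) := Nat.le_ceil _
  set K : ℝ := (N : ℝ) ^ 2 * C with hK
  have hK0 : 0 ≤ K := by positivity
  set t : ℝ := if μ = 0 then 1 else max 1 (Real.logb μ (2 * δ₂ / (K + 1))) with ht
  have ht1 : 1 ≤ t := by
    rcases eq_or_ne μ 0 with h | h <;> simp [ht, h]
  have key : ∀ E : ℝ, t ≤ E → K * μ ^ E ≤ 2 * δ₂ := by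
    intro E hE
    have hpos : 0 < 2 * δ₂ / (K + 1) := by positivity
    have hμE : μ ^ E ≤ 2 * δ₂ / (K + 1) := by
      rcases eq_or_ne μ 0 with h | h
      · rw [h, Real.zero_rpow (by nlinarith : E ≠ 0)]
        exact hpos.le
      · have hμpos : 0 < μ := lt_of_le_of_ne hμ₀ (Ne.symm h)
        have hlogb : Real.logb μ (2 * δ₂ / (K + 1)) ≤ E := by
          have h2 := le_max_right 1 (Real.logb μ (2 * δ₂ / (K + 1)))
          rw [ht, if_neg h] at hE
          linarith
        calc μ ^ E ≤ μ ^ Real.logb μ (2 * δ₂ / (K + 1)) :=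
              Real.rpow_le_rpow_of_exponent_ge hμpos hμ₁.le hlogb
          _ = 2 * δ₂ / (K + 1) := Real.rpow_logb hμpos (ne_of_lt hμ₁) hpos
    calc K * μ ^ E ≤ K * (2 * δ₂ / (K + 1)) :=
          mul_le_mul_of_nonneg_left hμE hK0
      _ ≤ 2 * δ₂ := by
          have h1 : K * (2 * δ₂ / (K + 1)) = K * (2 * δ₂) / (K + 1) := by ring
          rw [h1, div_le_iff₀ (by positivity)]
          nlinarith
  refine ⟨max 1 (R + 2 * A * (t + B + 2 * N)), lt_of_lt_of_le one_pos (le_max_left _ _), ?_⟩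
  intro a a' b b' hsum hbig
  have haa : dist a a' ≤ R := by
    have := dist_nonneg (x := b) (y := b'); linarith
  have hbb : dist b b' ≤ R := by
    have := dist_nonneg (x := a) (y := a'); linarith
  have hda : d a a' ≤ (N : ℝ) := by
    have h1 := (hqi a a').2
    nlinarith
  have hdb : d b b' ≤ (N : ℝ) := by
    have h1 := (hqi b b').2
    nlinarith
  -- dist a' b' ≤ dist a b + R
  have htri : dist a' b' ≤ dist a' a + dist a b + dist b b' := dist_triangle4 a' a b b'
  have hab_big : dist a b ≥ (max 1 (R + 2 * A * (t + B + 2 * N)) - R) / 2 := by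
    have : dist a' a = dist a a' := dist_comm a' a
    linarith
  have hRmax : R + 2 * A * (t + B + 2 * N) ≤ max 1 (R + 2 * A * (t + B + 2 * N)) :=
    le_max_right _ _
  have habA : A * (t + B + 2 * N) ≤ dist a b := by linarith
  have hE : t ≤ d a b - 2 * N := by
    have h1 := (hqi a b).1
    have : t + B + 2 * N ≤ (1 / A) * dist a b := by
      rw [div_mul_eq_mul_div, le_div_iff₀ hA]
      nlinarith
    linarith
  have habs := hdecay N a a' b b' hda hdb
  have hfin := key (d a b - 2 * N) hE
  have hneg := neg_abs_le (dist a b - dist a' b - dist a b' + dist a' b')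
  rw [hK] at hfin
  linarith
end

section
/- In a δ-fine hyperbolic geodesic space, let a, b, b' satisfy (a|b')_b ≤ 10δ and (a|b)_{b'} ≤ 10δ, and let v (resp. v') be the point at distance 10δ from b (resp. b') on a geodesic from b to a (resp. from b' to a), assuming d(a,b) > 10δ and d(a,b') > 10δ. Then d(v,v') ≤ 11δ. -/
/-- The Gromov product of `x` and `y` at `z`. -/
noncomputable def gromovProduct {X : Type*} [MetricSpace X] (z x y : X) : ℝ :=
  (dist z x + dist z y - dist x y) / 2

theorem fine_points_close_case2 {X : Type*} [MetricSpace X]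
    (δ : ℝ) (hδ : 0 ≤ δ)
    -- δ-fineness: two points on two sides of a geodesic triangle, at equal
    -- distance (at most the Gromov product) from the common vertex, are δ-close
    (hfine : ∀ x y z p q : X,
      dist x p + dist p y = dist x y →
      dist x q + dist q z = dist x z →
      dist x p = dist x q →
      dist x p ≤ gromovProduct x y z →
      dist p q ≤ δ)
    -- geodesics between any two points exist (so the comparison point w can be chosen)
    (hgeodesic : ∀ x y : X, ∀ t : ℝ, 0 ≤ t → t ≤ dist x y →
      ∃ w : X, dist x w = t ∧ dist x w + dist w y = dist x y)
    (a b b' v v' : X)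
    (hgp1 : gromovProduct b a b' ≤ 10 * δ)
    (hgp2 : gromovProduct b' a b ≤ 10 * δ)
    (hab : 10 * δ < dist a b) (hab' : 10 * δ < dist a b')
    -- v lies on a geodesic from b to a, at distance 10δ from b
    (hv : dist b v + dist v a = dist b a) (hvb : dist b v = 10 * δ)
    -- v' lies on a geodesic from b' to a, at distance 10δ from b'
    (hv' : dist b' v' + dist v' a = dist b' a) (hv'b : dist b' v' = 10 * δ) :
    dist v v' ≤ 11 * δ := by
  have e1 : dist a v = dist a b - 10 * δ := by
    have h1 := dist_comm a b; have h2 := dist_comm v a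
    linarith [hv, hvb]
  have e2 : dist a v' = dist a b' - 10 * δ := by
    have h1 := dist_comm a b'; have h2 := dist_comm v' a
    linarith [hv', hv'b]
  -- nonnegativity of the two Gromov products
  have hP1 : 0 ≤ gromovProduct b a b' := by
    unfold gromovProduct
    have := dist_triangle a b b'
    have h1 := dist_comm a b
    linarith
  have hP2 : 0 ≤ gromovProduct b' a b := by
    unfold gromovProduct
    have := dist_triangle a b' b
    have h1 := dist_comm a b'
    linarith
  -- expand the products
  have hPe1 : 2 * gromovProduct b a b' = dist a b + dist b b' - dist a b' := by
    unfold gromovProduct; have := dist_comm a b; linarith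
  have hPe2 : 2 * gromovProduct b' a b = dist a b' + dist b b' - dist a b := by
    unfold gromovProduct
    have h1 := dist_comm a b'; have h2 := dist_comm b b'
    linarith
  -- the difference of the two lengths is at most 10δ in absolute value
  have hdiff1 : dist a v' - dist a v ≤ 10 * δ := by linarith
  have hdiff2 : dist a v - dist a v' ≤ 10 * δ := by linarith
  -- both distances are at most the Gromov product at a
  have hprodA : 2 * gromovProduct a b b' = dist a b + dist a b' - dist b b' := by
    unfold gromovProduct; ring
  have hprod_s : dist a v ≤ gromovProduct a b b' := by linarith
  have hprod_t : dist a v' ≤ gromovProduct a b b' := by linarith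
  have hgeo_v : dist a v + dist v b = dist a b := by
    have h1 := dist_comm v b; linarith [hvb]
  have hgeo_v' : dist a v' + dist v' b' = dist a b' := by
    have h1 := dist_comm v' b'; linarith [hv'b]
  rcases le_total (dist a v) (dist a v') with hle | hle
  · -- extend v along its geodesic towards b by (dist a v' - dist a v)
    obtain ⟨w, hw1, hw2⟩ := hgeodesic v b (dist a v' - dist a v)
      (by linarith) (by rw [dist_comm v b, hvb]; linarith)
    have hvb' : dist v b = 10 * δ := by rw [dist_comm v b]; exact hvb
    have hwb : dist w b = 10 * δ - (dist a v' - dist a v) := by linarith [hw2, hvb']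
    have haw_le : dist a w ≤ dist a v' := by
      have := dist_triangle a v w; linarith [hw1]
    have haw_ge : dist a v' ≤ dist a w := by
      have := dist_triangle a w b; linarith [hwb]
    have haw : dist a w = dist a v' := le_antisymm haw_le haw_ge
    have hgeo_w : dist a w + dist w b = dist a b := by rw [haw, hwb]; linarith
    have hkey : dist w v' ≤ δ := hfine a b b' w v' hgeo_w hgeo_v'
      (by rw [haw]) (by rw [haw]; exact hprod_t)
    have := dist_triangle v w v'
    linarith [hw1]
  · -- extend v' along its geodesic towards b' by (dist a v - dist a v')
    obtain ⟨w, hw1, hw2⟩ := hgeodesic v' b' (dist a v - dist a v')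
      (by linarith) (by rw [dist_comm v' b', hv'b]; linarith)
    have hv'b2 : dist v' b' = 10 * δ := by rw [dist_comm v' b']; exact hv'b
    have hwb : dist w b' = 10 * δ - (dist a v - dist a v') := by linarith [hw2, hv'b2]
    have haw_le : dist a w ≤ dist a v := by
      have := dist_triangle a v' w; linarith [hw1]
    have haw_ge : dist a v ≤ dist a w := by
      have := dist_triangle a w b'; linarith [hwb]
    have haw : dist a w = dist a v := le_antisymm haw_le haw_ge
    have hgeo_w : dist a w + dist w b' = dist a b' := by rw [haw, hwb]; linarith
    have hprod' : dist a w ≤ gromovProduct a b' b := by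
      have : gromovProduct a b' b = gromovProduct a b b' := by
        unfold gromovProduct; rw [dist_comm b b']; ring
      rw [haw, this]; exact hprod_s
    have hkey : dist w v ≤ δ := hfine a b' b w v hgeo_w hgeo_v (by rw [haw]) hprod'
    have h1 := dist_triangle v' w v
    have h2 := dist_comm v v'
    have h3 := dist_comm v' w
    linarith [hw1]
end
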